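/- arXiv:1711.02869 — 5 statements merged into one kernel-verified Lean document; each statement's English description precedes it below -/
import Mathlib

section
/- Let D ≥ 1 and let L be a D×D real lower triangular matrix. Let V denote the vector space of D×D real lower triangular matrices, and define the linear endomorphism T_L of V by T_L(X) = tril(X Lᵀ + L Xᵀ), where tril(A) is the matrix whose (i,j) entry equals A i j when i ≥ j and 0 when i < j. Then the determinant of T_L equals 2^D · ∏_{i=1}^{D} (L i i)^{D+1-i}. -/
open Matrix

/-- The subspace of `D × D` real lower triangular matrices. -/
def lowerTriangularSubmodule (D : ℕ) : Submodule ℝ (Matrix (Fin D) (Fin D) ℝ) where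
  carrier := {X | ∀ i j : Fin D, i < j → X i j = 0}
  add_mem' := by
    intro X Y hX hY i j hij
    simp [Matrix.add_apply, hX i j hij, hY i j hij]
  zero_mem' := by intro i j _; rfl
  smul_mem' := by
    intro c X hX i j hij
    simp [Matrix.smul_apply, hX i j hij]

/-- `tril` : keep the lower triangular part of a matrix, as a linear map. -/
def trilLinearMap (D : ℕ) :
    Matrix (Fin D) (Fin D) ℝ →ₗ[ℝ] Matrix (Fin D) (Fin D) ℝ where
  toFun A := Matrix.of fun i j => if j ≤ i then A i j else 0
  map_add' A B := by
    ext i j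
    simp only [Matrix.of_apply, Matrix.add_apply]
    split <;> simp
  map_smul' c A := by
    ext i j
    simp only [Matrix.of_apply, Matrix.smul_apply, RingHom.id_apply]
    split <;> simp

/-- The endomorphism `X ↦ tril (X Lᵀ + L Xᵀ)` of the space of lower triangular
matrices: the Fréchet derivative of the Cholesky parametrization `L ↦ L Lᵀ`. -/
noncomputable def choleskyJacobianMap (D : ℕ) (L : Matrix (Fin D) (Fin D) ℝ) :
    lowerTriangularSubmodule D →ₗ[ℝ] lowerTriangularSubmodule D :=
  LinearMap.codRestrict (lowerTriangularSubmodule D)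
    ((trilLinearMap D).comp
      ((LinearMap.mulRight ℝ Lᵀ
          + (LinearMap.mulLeft ℝ L).comp
              (Matrix.transposeLinearEquiv (Fin D) (Fin D) ℝ ℝ).toLinearMap).comp
        (lowerTriangularSubmodule D).subtype))
    (by
      intro X i j hij
      simp only [LinearMap.comp_apply, trilLinearMap, LinearMap.coe_mk, AddHom.coe_mk,
        Matrix.of_apply]
      exact if_neg (not_le.mpr hij))

/-!
Order the entries `(i, j)`, `j ≤ i`, of a lower triangular matrix column by column, and by row
within a column. In the basis of matrix units, the coefficient of `T_L (E q.row q.col)` at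
`(p.row, p.col)` is `[p.row = q.row] L p.col q.col + [p.col = q.row] L p.row q.col`, which
vanishes for `p < q` because `L` is lower triangular. So `det T_L` is the product of the diagonal
coefficients: `L j j` at `(i, j)`, doubled when `i = j`; column `j` (counted from `0`) has
`D - j` entries.
-/

/-- The entry `(i, j)` of a lower triangular matrix has index `toLex (j, i)`. -/
abbrev TrilIndex (D : ℕ) := {p : Fin D ×ₗ Fin D // (ofLex p).1 ≤ (ofLex p).2}

namespace TrilIndex

variable {D : ℕ}

def row (p : TrilIndex D) : Fin D := (ofLex p.1).2

def col (p : TrilIndex D) : Fin D := (ofLex p.1).1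

theorem col_le_row (p : TrilIndex D) : p.col ≤ p.row := p.2

theorem lt_iff {p q : TrilIndex D} :
    p < q ↔ p.col < q.col ∨ p.col = q.col ∧ p.row < q.row :=
  Prod.Lex.lt_iff

theorem prod_eq_prod_Ici {M : Type*} [CommMonoid M] (f : Fin D → Fin D → M) :
    ∏ p : TrilIndex D, f p.col p.row = ∏ j, ∏ i ∈ Finset.Ici j, f j i := by
  simp only [col, row]
  rw [← Finset.prod_subtype {p : Fin D ×ₗ Fin D | (ofLex p).1 ≤ (ofLex p).2} (by simp)
    (fun p => f (ofLex p).1 (ofLex p).2), Finset.prod_filter,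
    ← Fintype.prod_equiv toLex (fun p => if p.1 ≤ p.2 then f p.1 p.2 else 1) _ (fun _ => rfl),
    Fintype.prod_prod_type]
  simp only [← Finset.prod_filter, Finset.filter_le_eq_Ici]

end TrilIndex

noncomputable def lowerTriangularEquivFun (D : ℕ) :
    lowerTriangularSubmodule D ≃ₗ[ℝ] (TrilIndex D → ℝ) where
  toFun X p := X.1 p.row p.col
  invFun f := ⟨Matrix.of fun i j => if h : j ≤ i then f ⟨toLex (j, i), h⟩ else 0,
    fun _ _ hij => dif_neg hij.not_ge⟩
  map_add' _ _ := rfl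
  map_smul' _ _ := rfl
  left_inv X := by
    ext i j
    by_cases h : j ≤ i
    · simp [h, TrilIndex.row, TrilIndex.col]
    · simp [h, X.2 i j (not_le.1 h)]
  right_inv f := funext fun p => dif_pos p.col_le_row

noncomputable def lowerTriangularBasis (D : ℕ) :
    Module.Basis (TrilIndex D) ℝ (lowerTriangularSubmodule D) :=
  .ofEquivFun (lowerTriangularEquivFun D)

section

variable {D : ℕ}

theorem coe_lowerTriangularBasis (q : TrilIndex D) :
    (lowerTriangularBasis D q : Matrix (Fin D) (Fin D) ℝ) = single q.row q.col 1 := by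
  ext i j
  simp only [lowerTriangularBasis, Module.Basis.coe_ofEquivFun, lowerTriangularEquivFun,
    LinearEquiv.coe_symm_mk', of_apply, single_apply]
  by_cases h : j ≤ i
  · rw [dif_pos h, Pi.single_apply]
    congr 1
    rw [Subtype.ext_iff, ← toLex_ofLex q.1, toLex_inj, Prod.ext_iff, and_comm]
    exact propext (and_congr eq_comm eq_comm)
  · rw [dif_neg h, if_neg]
    rintro ⟨rfl, rfl⟩
    exact h q.col_le_row

theorem trilLinearMap_apply_of_le (A : Matrix (Fin D) (Fin D) ℝ) {i j : Fin D} (h : j ≤ i) :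
    trilLinearMap D A i j = A i j :=
  if_pos h

theorem coe_choleskyJacobianMap_apply (L : Matrix (Fin D) (Fin D) ℝ)
    (X : lowerTriangularSubmodule D) :
    (choleskyJacobianMap D L X : Matrix (Fin D) (Fin D) ℝ)
      = trilLinearMap D (X.1 * Lᵀ + L * X.1ᵀ) :=
  rfl

theorem toMatrix_choleskyJacobianMap_apply (L : Matrix (Fin D) (Fin D) ℝ) (p q : TrilIndex D) :
    LinearMap.toMatrix (lowerTriangularBasis D) (lowerTriangularBasis D)
        (choleskyJacobianMap D L) p q
      = (if p.row = q.row then L p.col q.col else 0)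
        + (if p.col = q.row then L p.row q.col else 0) := by
  rw [LinearMap.toMatrix_apply, lowerTriangularBasis, Module.Basis.ofEquivFun_repr_apply]
  change (choleskyJacobianMap D L (lowerTriangularBasis D q) : Matrix _ _ ℝ) p.row p.col = _
  rw [coe_choleskyJacobianMap_apply, trilLinearMap_apply_of_le _ p.col_le_row,
    coe_lowerTriangularBasis, transpose_single, Matrix.add_apply]
  congr 1
  · by_cases h : p.row = q.row <;> simp [h]
  · by_cases h : p.col = q.row <;> simp [h]

theorem isLowerTriangular_toMatrix_choleskyJacobianMap {L : Matrix (Fin D) (Fin D) ℝ}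
    (hL : ∀ i j : Fin D, i < j → L i j = 0) :
    (LinearMap.toMatrix (lowerTriangularBasis D) (lowerTriangularBasis D)
      (choleskyJacobianMap D L)).IsLowerTriangular := by
  intro p q hpq
  have hlt : p.col < q.col ∨ p.col = q.col ∧ p.row < q.row := TrilIndex.lt_iff.mp hpq
  have hrow : (if p.row = q.row then L p.col q.col else 0) = 0 := by
    split_ifs with h
    · rcases hlt with hc | ⟨-, hr⟩
      · exact hL _ _ hc
      · exact absurd h hr.ne
    · rfl
  have hcol : p.col < q.row := by
    rcases hlt with hc | ⟨-, hr⟩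
    · exact hc.trans_le q.col_le_row
    · exact p.col_le_row.trans_lt hr
  rw [toMatrix_choleskyJacobianMap_apply, hrow, if_neg hcol.ne, add_zero]

theorem toMatrix_choleskyJacobianMap_apply_self (L : Matrix (Fin D) (Fin D) ℝ) (p : TrilIndex D) :
    LinearMap.toMatrix (lowerTriangularBasis D) (lowerTriangularBasis D)
        (choleskyJacobianMap D L) p p
      = (if p.col = p.row then 2 else 1) * L p.col p.col := by
  rw [toMatrix_choleskyJacobianMap_apply, if_pos rfl]
  split_ifs with h
  · rw [h]; ring
  · ring

end

theorem det_choleskyJacobianMap_general (D : ℕ) (L : Matrix (Fin D) (Fin D) ℝ)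
    (hL : ∀ i j : Fin D, i < j → L i j = 0) :
    LinearMap.det (choleskyJacobianMap D L)
      = 2 ^ D * ∏ i : Fin D, L i i ^ (D - (i : ℕ)) := by
  rw [← LinearMap.det_toMatrix (lowerTriangularBasis D),
    det_of_isLowerTriangular _ (isLowerTriangular_toMatrix_choleskyJacobianMap hL)]
  simp only [toMatrix_choleskyJacobianMap_apply_self]
  rw [TrilIndex.prod_eq_prod_Ici fun j i => (if j = i then (2 : ℝ) else 1) * L j j]
  have hcol : ∀ j : Fin D, ∏ i ∈ Finset.Ici j, (if j = i then (2 : ℝ) else 1) * L j j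
      = 2 * L j j ^ (D - (j : ℕ)) := by
    intro j
    rw [Finset.prod_mul_distrib, Finset.prod_ite_eq, if_pos (Finset.mem_Ici.2 le_rfl),
      Finset.prod_const, Fin.card_Ici]
  rw [Finset.prod_congr rfl fun j _ => hcol j, Finset.prod_mul_distrib, Finset.prod_const,
    Finset.card_univ, Fintype.card_fin]

/-- The determinant of `X ↦ tril (X Lᵀ + L Xᵀ)` on lower triangular matrices equals
`2^D ∏_{i=1}^D (L i i)^{D+1-i}` (Jacobian of `L ↦ L Lᵀ`, Lemma A.1). -/
theorem det_choleskyJacobianMap (D : ℕ) (hD : 1 ≤ D) (L : Matrix (Fin D) (Fin D) ℝ)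
    (hL : ∀ i j : Fin D, i < j → L i j = 0) :
    LinearMap.det (choleskyJacobianMap D L)
      = 2 ^ D * ∏ i : Fin D, L i i ^ (D - (i : ℕ)) :=
  det_choleskyJacobianMap_general D L hL
end

section
/- Fix D ≥ 2, c₀ > 0 and B > 0. There exists a constant C > 0, depending only on D, c₀ and B, such that for all D×D real lower triangular matrices L₀, L₁ with |L_i j j| ≥ c₀ for all j and |(L_i) j k| ≤ B for all j, k (i = 0, 1), setting Σ_i = L_i L_iᵀ and letting p_i(y) = (2π)^{-D/2} (det Σ_i)^{-1/2} exp(−½ yᵀ Σ_i⁻¹ y) be the centered Gaussian densities, one has ½ ∫_{ℝ^D} (√(p₀(y)) − √(p₁(y)))² dy ≤ C · max_{j,k} |(L₀) j k − (L₁) j k|. -/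
open Matrix MeasureTheory

/-- The multivariate normal density on `ℝ^D` with mean `μ` and covariance `S`. -/
noncomputable def gaussianDensity (D : ℕ) (μ : Fin D → ℝ)
    (S : Matrix (Fin D) (Fin D) ℝ) (y : Fin D → ℝ) : ℝ :=
  (2 * Real.pi) ^ (-(D : ℝ) / 2) * S.det ^ (-(1 : ℝ) / 2) *
    Real.exp (-(1 / 2) * ((y - μ) ⬝ᵥ (S⁻¹ *ᵥ (y - μ))))

/-!
Pointwise `(√p₀ - √p₁)² ≤ |p₀ - p₁|`, so it suffices to bound `|p₀ - p₁|` by an integrable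
envelope. Write `p_L(y) = (2π)^(-D/2) exp E_L(y)` with `E_L(y) = -log |det L| - yᵀ(LLᵀ)⁻¹y / 2`.
Then `E_L(y) ≤ -D log c₀ - |y|² / (2D²B²)`, and `E_L(y)` moves by `O((1 + |y|²) ‖L₀ - L₁‖_∞)`:
the log-determinant because `det L = ∏ L j j` with `|L j j| ≥ c₀`, the quadratic form because
`Σ₀⁻¹ - Σ₁⁻¹ = Σ₀⁻¹ (Σ₁ - Σ₀) Σ₁⁻¹`, whose outer factors have entries bounded through the
adjugate and `det Σᵢ ≥ c₀^(2D)`. Absorbing the factor `|y|²` into half of the Gaussian decay gives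
`|p₀ - p₁| ≤ K ‖L₀ - L₁‖_∞ exp (-|y|² / (4D²B²))`.
-/

open Finset Real

lemma sq_sqrt_sub_sqrt_le_abs_sub {a b : ℝ} (ha : 0 ≤ a) (hb : 0 ≤ b) :
    (√a - √b) ^ 2 ≤ |a - b| := by
  have hab : (√a - √b) * (√a + √b) = a - b := by
    ring_nf; rw [sq_sqrt ha, sq_sqrt hb]
  have hsum : |√a - √b| ≤ √a + √b :=
    abs_sub_le_iff.2 ⟨by linarith [sqrt_nonneg b], by linarith [sqrt_nonneg a]⟩
  calc (√a - √b) ^ 2 = |√a - √b| * |√a - √b| := by rw [abs_mul_abs_self, sq]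
    _ ≤ |√a - √b| * (√a + √b) := by gcongr
    _ = |a - b| := by rw [← hab, abs_mul, abs_of_nonneg (by positivity : 0 ≤ √a + √b)]

lemma abs_exp_sub_exp_le_exp_mul {a b c : ℝ} (ha : a ≤ c) (hb : b ≤ c) :
    |exp a - exp b| ≤ exp c * |a - b| := by
  wlog hba : b ≤ a generalizing a b
  · rw [abs_sub_comm, abs_sub_comm a]; exact this hb ha (le_of_not_ge hba)
  have h : exp a - exp b ≤ exp a * (a - b) := by
    have h1 := add_one_le_exp (b - a)
    have h2 : exp b = exp a * exp (b - a) := by rw [← exp_add]; ring_nf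
    nlinarith [exp_pos a]
  rw [abs_of_nonneg (sub_nonneg.2 (exp_le_exp.2 hba)), abs_of_nonneg (sub_nonneg.2 hba)]
  exact h.trans (by gcongr)

lemma abs_log_sub_log_le {c x y : ℝ} (hc : 0 < c) (hx : c ≤ x) (hy : c ≤ y) :
    |log x - log y| ≤ |x - y| / c := by
  wlog hyx : y ≤ x generalizing x y
  · rw [abs_sub_comm, abs_sub_comm x]; exact this hy hx (le_of_not_ge hyx)
  have hy0 : 0 < y := hc.trans_le hy
  have hx0 : 0 < x := hy0.trans_le hyx
  rw [abs_of_nonneg (sub_nonneg.2 (log_le_log hy0 hyx)), abs_of_nonneg (sub_nonneg.2 hyx),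
    ← log_div hx0.ne' hy0.ne']
  calc log (x / y) ≤ x / y - 1 := log_le_sub_one_of_pos (div_pos hx0 hy0)
    _ = (x - y) / y := by field_simp
    _ ≤ (x - y) / c := div_le_div_of_nonneg_left (sub_nonneg.2 hyx) hc hy

lemma mul_exp_neg_two_mul_le {b : ℝ} (hb : 0 < b) (t : ℝ) :
    t * exp (-(2 * b) * t) ≤ b⁻¹ * exp (-b * t) := by
  have ht : t ≤ b⁻¹ * exp (b * t) := by
    rw [le_inv_mul_iff₀ hb]; linarith [add_one_le_exp (b * t)]
  calc t * exp (-(2 * b) * t) ≤ b⁻¹ * exp (b * t) * exp (-(2 * b) * t) := by gcongr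
    _ = b⁻¹ * exp (-b * t) := by rw [mul_assoc, ← exp_add]; ring_nf

lemma abs_exp_sub_exp_le_mul_exp_neg {E₀ E₁ M α γ b t d : ℝ} (hα : 0 ≤ α) (hγ : 0 ≤ γ)
    (hb : 0 < b) (ht : 0 ≤ t) (hd : 0 ≤ d) (h₀ : E₀ ≤ M - 2 * b * t) (h₁ : E₁ ≤ M - 2 * b * t)
    (hE : |E₀ - E₁| ≤ (α + γ * t) * d) :
    |exp E₀ - exp E₁| ≤ exp M * (α + γ * b⁻¹) * d * exp (-b * t) := by
  calc |exp E₀ - exp E₁| ≤ exp (M - 2 * b * t) * ((α + γ * t) * d) :=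
        (abs_exp_sub_exp_le_exp_mul h₀ h₁).trans (by gcongr)
    _ = exp M * d * (α * exp (-(2 * b) * t) + γ * (t * exp (-(2 * b) * t))) := by
        rw [sub_eq_add_neg, exp_add]; ring_nf
    _ ≤ exp M * d * (α * exp (-b * t) + γ * (b⁻¹ * exp (-b * t))) := by
        gcongr exp M * d * (α * ?_ + γ * ?_)
        · exact exp_le_exp.2 (by nlinarith)
        · exact mul_exp_neg_two_mul_le hb t
    _ = exp M * (α + γ * b⁻¹) * d * exp (-b * t) := by ring

lemma integral_sq_sqrt_sub_sqrt_le {α : Type*} [MeasurableSpace α] {μ : Measure α}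
    {p q g : α → ℝ} (hp : ∀ x, 0 ≤ p x) (hq : ∀ x, 0 ≤ q x) (hg : Integrable g μ)
    (hpq : ∀ x, |p x - q x| ≤ g x) :
    ∫ x, (√(p x) - √(q x)) ^ 2 ∂μ ≤ ∫ x, g x ∂μ :=
  integral_mono_of_nonneg (ae_of_all _ fun _ => sq_nonneg _) hg
    (ae_of_all _ fun x => (sq_sqrt_sub_sqrt_le_abs_sub (hp x) (hq x)).trans (hpq x))

lemma le_ciSup_ciSup_of_finite {ι κ α : Type*} [Finite ι] [Finite κ]
    [ConditionallyCompleteLattice α] (f : ι → κ → α) (i : ι) (j : κ) :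
    f i j ≤ ⨆ i, ⨆ j, f i j :=
  (le_ciSup (Finite.bddAbove_range (f i)) j).trans
    (le_ciSup (f := fun i => ⨆ j, f i j) (Finite.bddAbove_range _) i)

lemma integrable_exp_neg_mul_sum_sq {ι : Type*} [Fintype ι] {a : ℝ} (ha : 0 < a) :
    Integrable fun y : ι → ℝ => exp (-a * ∑ i, y i ^ 2) := by
  simp_rw [mul_sum, exp_sum]
  exact Integrable.fintype_prod (f := fun _ x => exp (-a * x ^ 2))
    fun _ => integrable_exp_neg_mul_sq ha

lemma abs_mul_apply_le {l m n : Type*} [Fintype m] {A : Matrix l m ℝ} {B : Matrix m n ℝ} {a b : ℝ}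
    (hA : ∀ i k, |A i k| ≤ a) (hB : ∀ k j, |B k j| ≤ b) (i : l) (j : n) :
    |(A * B) i j| ≤ Fintype.card m * (a * b) := by
  rw [mul_apply]
  calc |∑ k, A i k * B k j| ≤ ∑ k, |A i k * B k j| := abs_sum_le_sum_abs _ _
    _ ≤ ∑ _k : m, a * b := by
        gcongr with k
        rw [abs_mul]
        exact mul_le_mul (hA i k) (hB k j) (abs_nonneg _) ((abs_nonneg _).trans (hA i k))
    _ = Fintype.card m * (a * b) := by simp

lemma abs_mul_transpose_sub_mul_transpose_apply_le {m n : Type*} [Fintype n]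
    {A B : Matrix m n ℝ} {a ε : ℝ}
    (hA : ∀ i j, |A i j| ≤ a) (hB : ∀ i j, |B i j| ≤ a) (hAB : ∀ i j, |A i j - B i j| ≤ ε)
    (i j : m) :
    |(A * Aᵀ - B * Bᵀ) i j| ≤ 2 * Fintype.card n * (a * ε) := by
  have hsplit : A * Aᵀ - B * Bᵀ = A * (A - B)ᵀ + (A - B) * Bᵀ := by
    simp only [transpose_sub, Matrix.mul_sub, Matrix.sub_mul]; abel
  have h₁ := abs_mul_apply_le hA (fun k j => hAB j k) i j
  have h₂ := abs_mul_apply_le hAB (fun k j => hB j k) i j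
  rw [hsplit, Matrix.add_apply]
  calc _ ≤ _ := abs_add_le _ _
    _ ≤ _ := add_le_add h₁ h₂
    _ = 2 * Fintype.card n * (a * ε) := by ring

section EntrywiseBounds

variable {n : Type*} [Fintype n]

lemma abs_dotProduct_mulVec_le {M : Matrix n n ℝ} {μ : ℝ} (hM : ∀ i j, |M i j| ≤ μ)
    (y : n → ℝ) : |y ⬝ᵥ (M *ᵥ y)| ≤ Fintype.card n * μ * ∑ i, y i ^ 2 := by
  have hterm : ∀ i j, |y i * (M i j * y j)| ≤ μ / 2 * (y i ^ 2 + y j ^ 2) := by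
    intro i j
    rw [abs_mul, abs_mul, ← sq_abs (y i), ← sq_abs (y j)]
    have hμ : 0 ≤ μ := (abs_nonneg _).trans (hM i j)
    nlinarith [mul_le_mul_of_nonneg_right (hM i j)
        (mul_nonneg (abs_nonneg (y i)) (abs_nonneg (y j))),
      two_mul_le_add_sq |y i| |y j|]
  calc |y ⬝ᵥ (M *ᵥ y)| = |∑ i, ∑ j, y i * (M i j * y j)| := by
        simp only [dotProduct, mulVec, mul_sum]
    _ ≤ ∑ i, ∑ j, |y i * (M i j * y j)| :=
        (abs_sum_le_sum_abs _ _).trans (sum_le_sum fun i _ => abs_sum_le_sum_abs _ _)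
    _ ≤ ∑ i, ∑ j, μ / 2 * (y i ^ 2 + y j ^ 2) := by gcongr with i _ j _; exact hterm i j
    _ = Fintype.card n * μ * ∑ i, y i ^ 2 := by
        simp only [mul_add, sum_add_distrib, ← mul_sum, sum_const, card_univ, nsmul_eq_mul]
        ring

variable [DecidableEq n]

lemma abs_inv_apply_le {M : Matrix n n ℝ} {E δ : ℝ} (hδ : 0 < δ) (hdet : δ ≤ |M.det|)
    (hM : ∀ i j, |M i j| ≤ E) (i j : n) :
    |M⁻¹ i j| ≤ (Fintype.card n).factorial * max E 1 ^ Fintype.card n / δ := by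
  have hadj : |M.adjugate i j| ≤ (Fintype.card n).factorial * max E 1 ^ Fintype.card n := by
    rw [adjugate_apply, ← nsmul_eq_mul]
    refine det_le (abv := AbsoluteValue.abs) fun k l => ?_
    rw [AbsoluteValue.abs_apply, updateRow_apply]
    split_ifs
    · rcases eq_or_ne l i with rfl | h <;> simp [*]
    · exact (hM k l).trans (le_max_left _ _)
  rw [Matrix.inv_def, Matrix.smul_apply, smul_eq_mul, Ring.inverse_eq_inv, abs_mul, abs_inv,
    div_eq_inv_mul]
  exact mul_le_mul (inv_anti₀ hδ hdet) hadj (abs_nonneg _) (inv_nonneg.2 hδ.le)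

lemma abs_dotProduct_inv_mulVec_sub_le {S₀ S₁ : Matrix n n ℝ} (h₀ : IsUnit S₀.det)
    (h₁ : IsUnit S₁.det) {μ ε : ℝ} (hμ₀ : ∀ i j, |S₀⁻¹ i j| ≤ μ) (hμ₁ : ∀ i j, |S₁⁻¹ i j| ≤ μ)
    (hε : ∀ i j, |(S₀ - S₁) i j| ≤ ε) (y : n → ℝ) :
    |y ⬝ᵥ (S₀⁻¹ *ᵥ y) - y ⬝ᵥ (S₁⁻¹ *ᵥ y)|
      ≤ Fintype.card n ^ 3 * (μ * ε * μ) * ∑ i, y i ^ 2 := by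
  have hinv : S₀⁻¹ - S₁⁻¹ = S₀⁻¹ * (S₁ - S₀) * S₁⁻¹ := by
    rw [Matrix.mul_sub, Matrix.sub_mul, mul_nonsing_inv_cancel_right _ _ h₁,
      nonsing_inv_mul _ h₀, Matrix.one_mul]
  have hε' : ∀ i j, |(S₁ - S₀) i j| ≤ ε := fun i j => by
    rw [← abs_neg, ← neg_apply, neg_sub]; exact hε i j
  rw [← dotProduct_sub, ← sub_mulVec, hinv]
  refine (abs_dotProduct_mulVec_le (abs_mul_apply_le (abs_mul_apply_le hμ₀ hε') hμ₁) y).trans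
    (le_of_eq (by ring))

lemma dotProduct_mul_transpose_inv_mulVec (L : Matrix n n ℝ) (y : n → ℝ) :
    y ⬝ᵥ ((L * Lᵀ)⁻¹ *ᵥ y) = ∑ i, (L⁻¹ *ᵥ y) i ^ 2 := by
  rw [Matrix.mul_inv_rev, ← mulVec_mulVec, dotProduct_mulVec, ← transpose_nonsing_inv,
    vecMul_transpose]
  simp [dotProduct, sq]

lemma sum_sq_le_mul_dotProduct_inv_mul_transpose_mulVec {L : Matrix n n ℝ} {B : ℝ}
    (hL : IsUnit L.det) (hB : ∀ i j, |L i j| ≤ B) (y : n → ℝ) :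
    ∑ i, y i ^ 2 ≤ Fintype.card n ^ 2 * B ^ 2 * y ⬝ᵥ ((L * Lᵀ)⁻¹ *ᵥ y) := by
  rw [dotProduct_mul_transpose_inv_mulVec]
  set w := L⁻¹ *ᵥ y
  have hy : y = L *ᵥ w := by simp [w, mulVec_mulVec, mul_nonsing_inv L hL]
  have hrow : ∀ i, y i ^ 2 ≤ Fintype.card n * B ^ 2 * ∑ j, w j ^ 2 := fun i => by
    calc y i ^ 2 = (∑ j, L i j * w j) ^ 2 := by rw [hy]; rfl
      _ ≤ (∑ j, L i j ^ 2) * ∑ j, w j ^ 2 := sum_mul_sq_le_sq_mul_sq _ _ _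
      _ ≤ (∑ _j : n, B ^ 2) * ∑ j, w j ^ 2 := by
          refine mul_le_mul_of_nonneg_right (sum_le_sum fun j _ => ?_) (by positivity)
          exact sq_le_sq.2 ((hB i j).trans (le_abs_self B))
      _ = Fintype.card n * B ^ 2 * ∑ j, w j ^ 2 := by simp
  calc ∑ i, y i ^ 2 ≤ ∑ _i : n, Fintype.card n * B ^ 2 * ∑ j, w j ^ 2 :=
        sum_le_sum fun i _ => hrow i
    _ = Fintype.card n ^ 2 * B ^ 2 * ∑ j, w j ^ 2 := by simp; ring

end EntrywiseBounds

structure IsBoundedCholeskyFactor {n : Type*} [LT n] (c₀ B : ℝ) (L : Matrix n n ℝ) : Prop where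
  isLowerTriangular : L.IsLowerTriangular
  le_abs_diag : ∀ j, c₀ ≤ |L j j|
  abs_le : ∀ i j, |L i j| ≤ B

namespace IsBoundedCholeskyFactor

variable {n : Type*} [Fintype n] [LinearOrder n] {c₀ B : ℝ} {L L₀ L₁ : Matrix n n ℝ}

lemma pow_card_le_abs_det (hL : IsBoundedCholeskyFactor c₀ B L) (hc₀ : 0 ≤ c₀) :
    c₀ ^ Fintype.card n ≤ |L.det| := by
  rw [det_of_isLowerTriangular L hL.isLowerTriangular, abs_prod]
  calc c₀ ^ Fintype.card n = ∏ _j : n, c₀ := by simp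
    _ ≤ ∏ j, |L j j| := prod_le_prod (fun _ _ => hc₀) fun j _ => hL.le_abs_diag j

lemma det_ne_zero (hL : IsBoundedCholeskyFactor c₀ B L) (hc₀ : 0 < c₀) : L.det ≠ 0 :=
  abs_pos.1 ((pow_pos hc₀ _).trans_le (hL.pow_card_le_abs_det hc₀.le))

lemma log_abs_det (hL : IsBoundedCholeskyFactor c₀ B L) (hc₀ : 0 < c₀) :
    log |L.det| = ∑ j, log |L j j| := by
  rw [det_of_isLowerTriangular L hL.isLowerTriangular, abs_prod, log_prod]
  exact fun j _ => (hc₀.trans_le (hL.le_abs_diag j)).ne'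

lemma exponent_le (hL : IsBoundedCholeskyFactor c₀ B L) (hc₀ : 0 < c₀)
    (y : n → ℝ) :
    -log |L.det| - y ⬝ᵥ ((L * Lᵀ)⁻¹ *ᵥ y) / 2
      ≤ -(Fintype.card n * log c₀) - (2 * Fintype.card n ^ 2 * B ^ 2)⁻¹ * ∑ i, y i ^ 2 := by
  have hdet : Fintype.card n * log c₀ ≤ log |L.det| := by
    rw [← log_pow]; exact log_le_log (by positivity) (hL.pow_card_le_abs_det hc₀.le)
  have hq : (Fintype.card n ^ 2 * B ^ 2)⁻¹ * ∑ i, y i ^ 2 ≤ y ⬝ᵥ ((L * Lᵀ)⁻¹ *ᵥ y) :=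
    inv_mul_le_of_le_mul₀ (by positivity)
      (by rw [dotProduct_mul_transpose_inv_mulVec]; positivity)
      (sum_sq_le_mul_dotProduct_inv_mul_transpose_mulVec (isUnit_iff_ne_zero.2 (hL.det_ne_zero hc₀))
        hL.abs_le y)
  have hhalf : (2 * Fintype.card n ^ 2 * B ^ 2 : ℝ)⁻¹ = (Fintype.card n ^ 2 * B ^ 2 : ℝ)⁻¹ / 2 := by
    ring
  rw [hhalf]
  linarith

lemma abs_log_abs_det_sub_le (h₀ : IsBoundedCholeskyFactor c₀ B L₀)
    (h₁ : IsBoundedCholeskyFactor c₀ B L₁) (hc₀ : 0 < c₀) {d : ℝ}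
    (hd : ∀ i j, |L₀ i j - L₁ i j| ≤ d) :
    |log |L₀.det| - log (|L₁.det|)| ≤ Fintype.card n * d / c₀ := by
  rw [h₀.log_abs_det hc₀, h₁.log_abs_det hc₀, ← sum_sub_distrib]
  calc _ ≤ ∑ j, |log |L₀ j j| - log (|L₁ j j|)| := abs_sum_le_sum_abs _ _
    _ ≤ ∑ _j : n, d / c₀ := by
        gcongr with j
        exact (abs_log_sub_log_le hc₀ (h₀.le_abs_diag j) (h₁.le_abs_diag j)).trans
          (div_le_div_of_nonneg_right ((abs_abs_sub_abs_le_abs_sub _ _).trans (hd j j)) hc₀.le)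
    _ = Fintype.card n * d / c₀ := by simp; ring

end IsBoundedCholeskyFactor

lemma exists_abs_dotProduct_inv_mul_transpose_mulVec_sub_le {n : Type*} [Fintype n] [LinearOrder n]
    {c₀ B : ℝ} (hc₀ : 0 < c₀) (hB : 0 ≤ B) :
    ∃ K ≥ 0, ∀ L₀ L₁ : Matrix n n ℝ, IsBoundedCholeskyFactor c₀ B L₀ →
      IsBoundedCholeskyFactor c₀ B L₁ → ∀ d, (∀ i j, |L₀ i j - L₁ i j| ≤ d) → ∀ y : n → ℝ,
        |y ⬝ᵥ ((L₀ * L₀ᵀ)⁻¹ *ᵥ y) - y ⬝ᵥ ((L₁ * L₁ᵀ)⁻¹ *ᵥ y)| ≤ K * d * ∑ i, y i ^ 2 := by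
  set N := Fintype.card n
  set μ : ℝ := N.factorial * max (N * (B * B)) 1 ^ N / (c₀ ^ N) ^ 2
  have hdet : ∀ L : Matrix n n ℝ, (L * Lᵀ).det = L.det * L.det := fun L => by
    rw [det_mul, det_transpose]
  have hμ : ∀ L : Matrix n n ℝ, IsBoundedCholeskyFactor c₀ B L → ∀ i j, |(L * Lᵀ)⁻¹ i j| ≤ μ := by
    intro L hL
    refine abs_inv_apply_le (by positivity) ?_ (abs_mul_apply_le hL.abs_le fun k j => hL.abs_le j k)
    rw [hdet, abs_mul, ← sq]
    exact pow_le_pow_left₀ (by positivity) (hL.pow_card_le_abs_det hc₀.le) 2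
  have hunit : ∀ L : Matrix n n ℝ, IsBoundedCholeskyFactor c₀ B L → IsUnit (L * Lᵀ).det :=
    fun L hL => by rw [hdet]; exact isUnit_iff_ne_zero.2 (mul_self_ne_zero.2 (hL.det_ne_zero hc₀))
  refine ⟨N ^ 3 * (μ * (2 * N * B) * μ), ?_, fun L₀ L₁ h₀ h₁ d hd y => ?_⟩
  · positivity
  refine (abs_dotProduct_inv_mulVec_sub_le (hunit L₀ h₀) (hunit L₁ h₁) (hμ L₀ h₀) (hμ L₁ h₁)
    (abs_mul_transpose_sub_mul_transpose_apply_le h₀.abs_le h₁.abs_le hd) y).trans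
    (le_of_eq (by ring))

lemma gaussianDensity_mul_transpose {D : ℕ} {L : Matrix (Fin D) (Fin D) ℝ} (hL : L.det ≠ 0)
    (y : Fin D → ℝ) :
    gaussianDensity D 0 (L * Lᵀ) y
      = (2 * π) ^ (-(D : ℝ) / 2) * exp (-log |L.det| - y ⬝ᵥ ((L * Lᵀ)⁻¹ *ᵥ y) / 2) := by
  have h : 0 < |L.det| := abs_pos.2 hL
  have hdet : (L * Lᵀ).det ^ (-(1 : ℝ) / 2) = exp (-log |L.det|) := by
    rw [det_mul, det_transpose, ← abs_mul_abs_self, rpow_def_of_pos (mul_pos h h),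
      log_mul h.ne' h.ne']
    congr 1; ring
  rw [gaussianDensity, sub_zero, hdet, mul_assoc, ← exp_add]
  congr 2; ring

lemma gaussianDensity_mul_transpose_nonneg {D : ℕ} (L : Matrix (Fin D) (Fin D) ℝ)
    (y : Fin D → ℝ) : 0 ≤ gaussianDensity D 0 (L * Lᵀ) y := by
  rw [gaussianDensity, det_mul, det_transpose]
  have := mul_self_nonneg L.det
  positivity

theorem exists_abs_gaussianDensity_sub_le {D : ℕ} (hD : 0 < D) {c₀ B : ℝ} (hc₀ : 0 < c₀)
    (hB : 0 < B) :
    ∃ K, ∀ L₀ L₁ : Matrix (Fin D) (Fin D) ℝ, IsBoundedCholeskyFactor c₀ B L₀ →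
      IsBoundedCholeskyFactor c₀ B L₁ → ∀ d, (∀ i j, |L₀ i j - L₁ i j| ≤ d) → ∀ y : Fin D → ℝ,
        |gaussianDensity D 0 (L₀ * L₀ᵀ) y - gaussianDensity D 0 (L₁ * L₁ᵀ) y|
          ≤ K * d * exp (-(4 * (D : ℝ) ^ 2 * B ^ 2)⁻¹ * ∑ i, y i ^ 2) := by
  obtain ⟨Kq, hKq, hq⟩ :=
    exists_abs_dotProduct_inv_mul_transpose_mulVec_sub_le (n := Fin D) hc₀ hB.le
  set b : ℝ := (4 * (D : ℝ) ^ 2 * B ^ 2)⁻¹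
  have hrate : (2 * (D : ℝ) ^ 2 * B ^ 2)⁻¹ = 2 * b := by simp only [b]; field_simp; ring
  refine ⟨(2 * π) ^ (-(D : ℝ) / 2) * exp (-(D * log c₀)) * (D / c₀ + Kq / 2 * b⁻¹),
    fun L₀ L₁ h₀ h₁ d hd y => ?_⟩
  have hd₀ : 0 ≤ d := (abs_nonneg _).trans (hd ⟨0, hD⟩ ⟨0, hD⟩)
  have hE₀ := h₀.exponent_le hc₀ y
  have hE₁ := h₁.exponent_le hc₀ y
  simp only [Fintype.card_fin, hrate] at hE₀ hE₁
  set q₀ := y ⬝ᵥ ((L₀ * L₀ᵀ)⁻¹ *ᵥ y)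
  set q₁ := y ⬝ᵥ ((L₁ * L₁ᵀ)⁻¹ *ᵥ y)
  have hΔ : |(-log |L₀.det| - q₀ / 2) - (-log |L₁.det| - q₁ / 2)|
      ≤ (D / c₀ + Kq / 2 * ∑ i, y i ^ 2) * d := by
    have hlog := h₀.abs_log_abs_det_sub_le h₁ hc₀ hd
    rw [Fintype.card_fin] at hlog
    calc _ = |-(log |L₀.det| - log |L₁.det|) + -((q₀ - q₁) / 2)| := by ring_nf
      _ ≤ |log |L₀.det| - log (|L₁.det|)| + |q₀ - q₁| / 2 := by
          refine (abs_add_le _ _).trans_eq ?_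
          rw [abs_neg, abs_neg, abs_div, abs_two]
      _ ≤ D * d / c₀ + Kq * d * (∑ i, y i ^ 2) / 2 := by gcongr; exact hq L₀ L₁ h₀ h₁ d hd y
      _ = (D / c₀ + Kq / 2 * ∑ i, y i ^ 2) * d := by ring
  rw [gaussianDensity_mul_transpose (h₀.det_ne_zero hc₀),
    gaussianDensity_mul_transpose (h₁.det_ne_zero hc₀), ← mul_sub, abs_mul,
    abs_of_pos (by positivity : (0 : ℝ) < (2 * π) ^ (-(D : ℝ) / 2))]
  refine (mul_le_mul_of_nonneg_left (abs_exp_sub_exp_le_mul_exp_neg (by positivity)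
    (by positivity) (by positivity) (by positivity) hd₀ hE₀ hE₁ hΔ) (by positivity)).trans_eq ?_
  ring

/-- Hellinger bound `h²(p₀,p₁) ≤ C ‖L₀ − L₁‖_∞` of Lemma B.1. -/
theorem hellinger_le_of_cholesky_close
    (D : ℕ) (hD : 2 ≤ D) (c₀ B : ℝ) (hc₀ : 0 < c₀) (hB : 0 < B) :
    ∃ C > 0, ∀ L₀ L₁ : Matrix (Fin D) (Fin D) ℝ,
      (∀ i j : Fin D, i < j → L₀ i j = 0) → (∀ i j : Fin D, i < j → L₁ i j = 0) →
      (∀ j : Fin D, c₀ ≤ |L₀ j j|) → (∀ j : Fin D, c₀ ≤ |L₁ j j|) →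
      (∀ j k : Fin D, |L₀ j k| ≤ B) → (∀ j k : Fin D, |L₁ j k| ≤ B) →
      (1 / 2) * ∫ y : Fin D → ℝ,
          (Real.sqrt (gaussianDensity D 0 (L₀ * L₀ᵀ) y)
            - Real.sqrt (gaussianDensity D 0 (L₁ * L₁ᵀ) y)) ^ 2
        ≤ C * ⨆ j : Fin D, ⨆ k : Fin D, |L₀ j k - L₁ j k| := by
  obtain ⟨K, hK⟩ := exists_abs_gaussianDensity_sub_le (D := D) (by omega) hc₀ hB
  set a : ℝ := (4 * (D : ℝ) ^ 2 * B ^ 2)⁻¹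
  set J := ∫ y : Fin D → ℝ, exp (-a * ∑ i, y i ^ 2)
  have hint : Integrable fun y : Fin D → ℝ => exp (-a * ∑ i, y i ^ 2) :=
    integrable_exp_neg_mul_sum_sq (by positivity)
  refine ⟨max (K * J / 2) 1, by positivity, fun L₀ L₁ htri₀ htri₁ hdiag₀ hdiag₁ hbnd₀ hbnd₁ => ?_⟩
  have h₀ : IsBoundedCholeskyFactor c₀ B L₀ := ⟨fun i j h => htri₀ i j h, hdiag₀, hbnd₀⟩
  have h₁ : IsBoundedCholeskyFactor c₀ B L₁ := ⟨fun i j h => htri₁ i j h, hdiag₁, hbnd₁⟩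
  set δ := ⨆ j : Fin D, ⨆ k : Fin D, |L₀ j k - L₁ j k|
  have hδ₀ : 0 ≤ δ := Real.iSup_nonneg fun j => Real.iSup_nonneg fun k => abs_nonneg _
  calc _ ≤ 1 / 2 * ∫ y : Fin D → ℝ, K * δ * exp (-a * ∑ i, y i ^ 2) := by
        refine mul_le_mul_of_nonneg_left ?_ (by norm_num)
        exact integral_sq_sqrt_sub_sqrt_le (gaussianDensity_mul_transpose_nonneg L₀)
          (gaussianDensity_mul_transpose_nonneg L₁) (hint.const_mul _)
          (hK L₀ L₁ h₀ h₁ δ (le_ciSup_ciSup_of_finite fun j k => |L₀ j k - L₁ j k|))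
    _ = K * J / 2 * δ := by rw [integral_const_mul]; ring
    _ ≤ max (K * J / 2) 1 * δ := by gcongr; exact le_max_left _ _
end

section
/- Let D ≥ 2, c₀ > 0, and let L be a D×D real lower triangular matrix with |L j j| ≥ c₀ for all j. Let B = max_{j,k} |L j k| and let Σ = L Lᵀ. Then the smallest eigenvalue of Σ satisfies λ_min(Σ) ≥ c₀^{2D} (D−1) / (D^{2(D−1)} B^{2(D−1)}). -/
/-!
`det Σ = ∏ⱼ Lⱼⱼ² ≥ c₀^{2D}`, and the eigenvalues of `Σ` are nonnegative with sum
`tr Σ = ∑ Lⱼₖ² ≤ D²B²`. For nonnegative numbers with sum at most `T`, `n · ∏ ≤ Tⁿ`; applied to the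
`D - 1` eigenvalues other than `λᵢ` this bounds `(D - 1) det Σ ≤ λᵢ (D²B²)^{D-1}`.
-/

open Matrix Finset

section CardMulProd

variable {ι R : Type*} [CommSemiring R] [LinearOrder R] [IsStrictOrderedRing R]

/-- The smallest of the `x j` is at most `T / #s`, the others at most `T`. -/
theorem Finset.card_mul_prod_le_pow_card [DecidableEq ι] (s : Finset ι) {x : ι → R} {T : R}
    (hx : ∀ j ∈ s, 0 ≤ x j) (hsum : ∑ j ∈ s, x j ≤ T) :
    (#s : R) * ∏ j ∈ s, x j ≤ T ^ #s := by
  rcases s.eq_empty_or_nonempty with rfl | hne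
  · simp
  obtain ⟨j₀, hj₀, hmin⟩ := s.exists_min_image x hne
  have hcard_mul_min : (#s : R) * x j₀ ≤ T :=
    calc (#s : R) * x j₀ = ∑ _j ∈ s, x j₀ := by rw [sum_const, nsmul_eq_mul]
      _ ≤ ∑ j ∈ s, x j := sum_le_sum hmin
      _ ≤ T := hsum
  have hle : ∀ j ∈ s, x j ≤ T := fun j hj => (single_le_sum hx hj).trans hsum
  have hT : 0 ≤ T := (hx j₀ hj₀).trans (hle j₀ hj₀)
  calc (#s : R) * ∏ j ∈ s, x j = (#s * x j₀) * ∏ j ∈ s.erase j₀, x j := by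
        rw [← mul_prod_erase s x hj₀, mul_assoc]
    _ ≤ T * T ^ #(s.erase j₀) := by
        gcongr
        · exact prod_nonneg fun j hj => hx j (mem_of_mem_erase hj)
        · exact (prod_le_prod (fun j hj => hx j (mem_of_mem_erase hj))
            fun j hj => hle j (mem_of_mem_erase hj)).trans_eq (prod_const T)
    _ = T ^ #s := by rw [← pow_succ', card_erase_add_one hj₀]

end CardMulProd

namespace Matrix

variable {m n : Type*} [Fintype m] [Fintype n]

theorem det_mul_transpose_of_isLowerTriangular [LinearOrder n] {R : Type*} [CommRing R]
    {L : Matrix n n R} (hL : L.IsLowerTriangular) :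
    (L * Lᵀ).det = ∏ j, L j j ^ 2 := by
  rw [det_mul, det_transpose, det_of_isLowerTriangular L hL, ← prod_mul_distrib]
  simp only [sq]

theorem pow_two_mul_card_le_det_mul_transpose [LinearOrder n] {L : Matrix n n ℝ}
    (hL : L.IsLowerTriangular) {c : ℝ} (hc : 0 ≤ c) (hdiag : ∀ j, c ≤ |L j j|) :
    c ^ (2 * Fintype.card n) ≤ (L * Lᵀ).det := by
  rw [det_mul_transpose_of_isLowerTriangular hL, pow_mul, ← card_univ, ← prod_const]
  exact prod_le_prod (fun _ _ => sq_nonneg c)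
    fun j _ => (sq_abs (L j j)) ▸ pow_le_pow_left₀ hc (hdiag j) 2

theorem trace_mul_transpose_le {A : Matrix m n ℝ} {B : ℝ} (hA : ∀ j k, |A j k| ≤ B) :
    (A * Aᵀ).trace ≤ Fintype.card m * Fintype.card n * B ^ 2 := by
  have hentry : ∀ j k, A j k * A j k ≤ B ^ 2 := fun j k => by
    rw [← sq, ← sq_abs]
    exact pow_le_pow_left₀ (abs_nonneg _) (hA j k) 2
  calc (A * Aᵀ).trace = ∑ j, ∑ k, A j k * A j k := by
        simp only [trace, diag, mul_apply, transpose_apply]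
    _ ≤ ∑ _j : m, ∑ _k : n, B ^ 2 := sum_le_sum fun j _ => sum_le_sum fun k _ => hentry j k
    _ = Fintype.card m * Fintype.card n * B ^ 2 := by simp [mul_assoc]

theorem PosSemidef.det_mul_card_sub_one_le_eigenvalues_mul_trace_pow [DecidableEq n]
    {A : Matrix n n ℝ} (hA : A.PosSemidef) (i : n) :
    A.det * ((Fintype.card n - 1 : ℕ) : ℝ) ≤
      hA.1.eigenvalues i * A.trace ^ (Fintype.card n - 1) := by
  set μ := hA.1.eigenvalues
  have hμ : ∀ j, 0 ≤ μ j := hA.eigenvalues_nonneg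
  have hdet : A.det = μ i * ∏ j ∈ univ.erase i, μ j := by
    rw [hA.1.det_eq_prod_eigenvalues, mul_prod_erase univ μ (mem_univ i)]
    rfl
  have hsum : ∑ j ∈ univ.erase i, μ j ≤ A.trace := by
    rw [hA.1.trace_eq_sum_eigenvalues]
    exact sum_le_sum_of_subset_of_nonneg (erase_subset i univ) fun j _ _ => hμ j
  have hcard : #(univ.erase i) = Fintype.card n - 1 := by
    rw [card_erase_of_mem (mem_univ i), card_univ]
  rw [hdet, mul_assoc, mul_comm (∏ j ∈ _, μ j), ← hcard]
  exact mul_le_mul_of_nonneg_left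
    (card_mul_prod_le_pow_card _ (fun j _ => hμ j) hsum) (hμ i)

end Matrix

theorem eigenvalue_lower_bound_cholesky_general
    (D : ℕ) (c₀ B : ℝ) (hc₀ : 0 < c₀)
    (L : Matrix (Fin D) (Fin D) ℝ)
    (htri : ∀ i j : Fin D, i < j → L i j = 0)
    (hdiag : ∀ j : Fin D, c₀ ≤ |L j j|)
    (hB : B = ⨆ j : Fin D, ⨆ k : Fin D, |L j k|)
    (hHerm : (L * Lᵀ).IsHermitian) :
    ∀ i : Fin D,
      c₀ ^ (2 * D) * ((D : ℝ) - 1) / ((D : ℝ) ^ (2 * (D - 1)) * B ^ (2 * (D - 1)))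
        ≤ hHerm.eigenvalues i := by
  intro i
  have hpsd : (L * Lᵀ).PosSemidef := by simpa using posSemidef_self_mul_conjTranspose L
  have hLB : ∀ j k, |L j k| ≤ B := fun j k => hB ▸ le_ciSup_of_le (Set.finite_range _).bddAbove j
    (le_ciSup (f := fun k => |L j k|) (Set.finite_range _).bddAbove k)
  have hdet := pow_two_mul_card_le_det_mul_transpose htri hc₀.le hdiag
  have htrace := trace_mul_transpose_le hLB
  have hkey := hpsd.det_mul_card_sub_one_le_eigenvalues_mul_trace_pow i
  simp only [Fintype.card_fin] at hdet htrace hkey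
  have hD : ((D : ℝ) - 1) = ((D - 1 : ℕ) : ℝ) := by
    rw [Nat.cast_sub (Nat.one_le_of_lt i.2), Nat.cast_one]
  refine div_le_of_le_mul₀ (mul_nonneg (by positivity) ((even_two_mul _).pow_nonneg B))
    (hpsd.eigenvalues_nonneg i) ?_
  calc c₀ ^ (2 * D) * ((D : ℝ) - 1) ≤ (L * Lᵀ).det * ((D - 1 : ℕ) : ℝ) := by
        rw [hD]; gcongr
    _ ≤ hHerm.eigenvalues i * (L * Lᵀ).trace ^ (D - 1) := hkey
    _ ≤ hHerm.eigenvalues i * (D * D * B ^ 2) ^ (D - 1) := by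
        gcongr
        · exact hpsd.eigenvalues_nonneg i
        · exact hpsd.trace_nonneg
    _ = hHerm.eigenvalues i * ((D : ℝ) ^ (2 * (D - 1)) * B ^ (2 * (D - 1))) := by
        rw [pow_mul, pow_mul, ← mul_pow, sq, sq]

/-- Eigenvalue lower bound from the proof of Lemma B.1: for lower triangular `L`
with `|L j j| ≥ c₀` and `B = max_{j,k} |L j k|`, every eigenvalue of `Σ = L Lᵀ`
is at least `c₀^{2D} (D−1) / (D^{2(D−1)} B^{2(D−1)})`. -/
theorem eigenvalue_lower_bound_cholesky
    (D : ℕ) (hD : 2 ≤ D) (c₀ B : ℝ) (hc₀ : 0 < c₀)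
    (L : Matrix (Fin D) (Fin D) ℝ)
    (htri : ∀ i j : Fin D, i < j → L i j = 0)
    (hdiag : ∀ j : Fin D, c₀ ≤ |L j j|)
    (hB : B = ⨆ j : Fin D, ⨆ k : Fin D, |L j k|)
    (hHerm : (L * Lᵀ).IsHermitian) :
    ∀ i : Fin D,
      c₀ ^ (2 * D) * ((D : ℝ) - 1) / ((D : ℝ) ^ (2 * (D - 1)) * B ^ (2 * (D - 1)))
        ≤ hHerm.eigenvalues i :=
  eigenvalue_lower_bound_cholesky_general D c₀ B hc₀ L htri hdiag hB hHerm
end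

section
/- Let D ≥ 1, r > 0, h ∈ ℝ, and let q, q', v, v⁺, g, g' ∈ ℝ^D satisfy ‖q‖ = ‖q'‖ = r, ⟨q, v⟩ = 0 and ⟨q', v⁺⟩ = 0. For x with ‖x‖ = r define P(x)w = w − (⟨x,w⟩/r²) · x. Set v⁻ = v − (h/2) · P(q)g and v' = v⁺ − (h/2) · P(q')g', and assume ‖v⁺‖ = ‖v⁻‖. Then ½‖v'‖² − ½‖v‖² = −(h/2) ( ⟨v, g⟩ + ⟨v', g'⟩ ) − (h²/8) ( ‖P(q')g'‖² − ‖P(q)g‖² ). -/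
/-!
Both half-step kicks change the squared speed by
`‖u - (h/2) • P w‖² = ‖u‖² - h ⟪u, w⟫ + (h²/4) ‖P w‖²`, where `P` may be dropped next to `u`
because `u` is tangent at the base point. The norm-preserving geodesic flow identifies `‖v⁺‖` with
`‖v⁻‖`, so the two kicks telescope; finally `⟪v', g'⟫` is traded for `⟪v⁺, g'⟫` using
`⟪P w, w⟫ = ‖P w‖²`, which holds because `P w` is orthogonal to the base point.
-/

open scoped RealInnerProductSpace

section SphereTangentProj

variable {E : Type*} [NormedAddCommGroup E] [InnerProductSpace ℝ E]

/-- For `‖x‖ = r` this is the orthogonal projection onto the tangent space at `x` of the sphere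
of radius `r`. -/
noncomputable def sphereTangentProj (r : ℝ) (x w : E) : E :=
  w - (⟪x, w⟫ / r ^ 2) • x

theorem inner_sphereTangentProj_right_of_inner_eq_zero {r : ℝ} {x u : E} (hux : ⟪u, x⟫ = 0)
    (w : E) : ⟪u, sphereTangentProj r x w⟫ = ⟪u, w⟫ := by
  simp [sphereTangentProj, inner_sub_right, inner_smul_right, hux]

theorem inner_sphereTangentProj_left_self {r : ℝ} {x : E} (hx : ‖x‖ = r) (w : E) :
    ⟪sphereTangentProj r x w, x⟫ = 0 := by
  rcases eq_or_ne x 0 with rfl | hx0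
  · simp
  have hr : r ≠ 0 := hx ▸ norm_ne_zero_iff.mpr hx0
  rw [sphereTangentProj, inner_sub_left, real_inner_smul_left, real_inner_self_eq_norm_sq, hx,
    real_inner_comm]
  field_simp
  ring

theorem inner_sphereTangentProj_left_eq_norm_sq {r : ℝ} {x : E} (hx : ‖x‖ = r) (w : E) :
    ⟪sphereTangentProj r x w, w⟫ = ‖sphereTangentProj r x w‖ ^ 2 := by
  rw [← real_inner_self_eq_norm_sq]
  nth_rewrite 3 [sphereTangentProj]
  rw [inner_sub_right, inner_smul_right,
    inner_sphereTangentProj_left_self hx, mul_zero, sub_zero]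

theorem norm_sub_smul_sphereTangentProj_sq {r : ℝ} {x u : E} (hux : ⟪u, x⟫ = 0) (c : ℝ)
    (w : E) :
    ‖u - c • sphereTangentProj r x w‖ ^ 2
      = ‖u‖ ^ 2 - 2 * c * ⟪u, w⟫ + c ^ 2 * ‖sphereTangentProj r x w‖ ^ 2 := by
  rw [norm_sub_sq_real, inner_smul_right, inner_sphereTangentProj_right_of_inner_eq_zero hux,
    norm_smul, mul_pow, Real.norm_eq_abs, sq_abs]
  ring

theorem inner_sub_smul_sphereTangentProj {r : ℝ} {x : E} (hx : ‖x‖ = r) (u : E) (c : ℝ)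
    (w : E) :
    ⟪u - c • sphereTangentProj r x w, w⟫ = ⟪u, w⟫ - c * ‖sphereTangentProj r x w‖ ^ 2 := by
  rw [inner_sub_left, real_inner_smul_left, inner_sphereTangentProj_left_eq_norm_sq hx]

end SphereTangentProj

theorem sphHMC_leapfrog_energy_difference_general
    (D : ℕ) (r h : ℝ)
    (q q' v vplus g g' : EuclideanSpace ℝ (Fin D))
    (hq' : ‖q'‖ = r)
    (hqv : ⟪q, v⟫ = 0) (hq'v : ⟪q', vplus⟫ = 0)
    (P : EuclideanSpace ℝ (Fin D) → EuclideanSpace ℝ (Fin D)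
          → EuclideanSpace ℝ (Fin D))
    (hP : ∀ x w, P x w = w - (⟪x, w⟫ / r ^ 2) • x)
    (vminus v' : EuclideanSpace ℝ (Fin D))
    (hvminus : vminus = v - (h / 2) • P q g)
    (hv' : v' = vplus - (h / 2) • P q' g')
    (hnorm : ‖vplus‖ = ‖vminus‖) :
    (1 / 2) * ‖v'‖ ^ 2 - (1 / 2) * ‖v‖ ^ 2
      = -(h / 2) * (⟪v, g⟫ + ⟪v', g'⟫)
        - (h ^ 2 / 8) * (‖P q' g'‖ ^ 2 - ‖P q g‖ ^ 2) := by
  obtain rfl : P = sphereTangentProj r := funext fun x => funext (hP x)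
  have hvminus_sq :=
    norm_sub_smul_sphereTangentProj_sq (r := r) ((real_inner_comm q v).trans hqv) (h / 2) g
  have hv'_sq :=
    norm_sub_smul_sphereTangentProj_sq (r := r) ((real_inner_comm q' vplus).trans hq'v) (h / 2) g'
  have hv'_inner := inner_sub_smul_sphereTangentProj hq' vplus (h / 2) g'
  rw [← hvminus, ← hnorm] at hvminus_sq
  rw [← hv'] at hv'_sq hv'_inner
  rw [hv'_sq, hvminus_sq, hv'_inner]
  ring

/-- Single-leapfrog-step energy-difference identity of Spherical HMC
(Appendix C of the paper). -/
theorem sphHMC_leapfrog_energy_difference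
    (D : ℕ) (hD : 1 ≤ D) (r h : ℝ) (hr : 0 < r)
    (q q' v vplus g g' : EuclideanSpace ℝ (Fin D))
    (hq : ‖q‖ = r) (hq' : ‖q'‖ = r)
    (hqv : ⟪q, v⟫ = 0) (hq'v : ⟪q', vplus⟫ = 0)
    (P : EuclideanSpace ℝ (Fin D) → EuclideanSpace ℝ (Fin D)
          → EuclideanSpace ℝ (Fin D))
    (hP : ∀ x w, P x w = w - (⟪x, w⟫ / r ^ 2) • x)
    (vminus v' : EuclideanSpace ℝ (Fin D))
    (hvminus : vminus = v - (h / 2) • P q g)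
    (hv' : v' = vplus - (h / 2) • P q' g')
    (hnorm : ‖vplus‖ = ‖vminus‖) :
    (1 / 2) * ‖v'‖ ^ 2 - (1 / 2) * ‖v‖ ^ 2
      = -(h / 2) * (⟪v, g⟫ + ⟪v', g'⟫)
        - (h ^ 2 / 8) * (‖P q' g'‖ ^ 2 - ‖P q g‖ ^ 2) :=
  sphHMC_leapfrog_energy_difference_general D r h q q' v vplus g g' hq' hqv hq'v P hP vminus v'
    hvminus hv' hnorm
end

section
/- Let D ≥ 1 and let L be a D×D real lower triangular matrix with nonzero diagonal entries. Let P = L Lᵀ and, for 1 ≤ i ≤ D, let M_i denote the i-th leading principal minor of P (the determinant of the top-left i×i submatrix). Then (det P)^{D(D−1)/2 − 1} · ∏_{i=1}^{D} M_i^{−(D+1)/2} = ∏_{j=1}^{D} |L j j|^{(j−3)(D+1)}, where all powers are real powers of positive real numbers. -/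
/-! For lower-triangular `L`, the leading `i × i` block of `P = L Lᵀ` is the leading block of `L`
times its transpose, so `M_i = ∏_{k ≤ i} l_kk²` and `det P = ∏_k l_kk²`. With `k` counted from 1,
the factor `l_kk²` occurs in `det P` and in the `D - k + 1` minors `M_i` with `i ≥ k`, so its total
exponent on `|l_kk|` is `2 (D(D-1)/2 - 1) - (D+1)(D-k+1) = (k-3)(D+1)`. -/

open Matrix Finset

theorem Fin.map_castLEEmb_univ {n : ℕ} (i : Fin n) : univ.map (Fin.castLEEmb i.isLt) = Iic i := by
  ext k
  simp only [mem_map, mem_univ, true_and, mem_Iic, Fin.castLEEmb_apply, Fin.le_def]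
  exact ⟨fun ⟨a, ha⟩ => ha ▸ Nat.le_of_lt_succ a.isLt, fun hk => ⟨⟨k, Nat.lt_succ_of_le hk⟩, rfl⟩⟩

theorem Fin.prod_prod_Iic_eq_prod_pow {M : Type*} [CommMonoid M] {n : ℕ} (f : Fin n → M) :
    ∏ i, ∏ k ≤ i, f k = ∏ k, f k ^ (n - k) := by
  rw [prod_comm' (s' := Ici) (t' := univ) (by simp)]
  simp [Fin.card_Ici]

namespace Matrix

variable {α : Type*} {n m : ℕ}

theorem IsLowerTriangular.submatrix_castLE [Zero α] {A : Matrix (Fin n) (Fin n) α}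
    (hA : A.IsLowerTriangular) (h : m ≤ n) :
    (A.submatrix (Fin.castLE h) (Fin.castLE h)).IsLowerTriangular :=
  fun _ _ hij => hA hij

theorem IsLowerTriangular.sum_mul_eq_sum_Iic [NonUnitalNonAssocSemiring α]
    {A : Matrix (Fin n) (Fin n) α} (hA : A.IsLowerTriangular) (i : Fin n) (v : Fin n → α) :
    ∑ k, A i k * v k = ∑ k ≤ i, A i k * v k :=
  (sum_subset (subset_univ _) fun k _ hk => by
    rw [hA (show i < k from not_le.1 (mem_Iic.not.1 hk)), zero_mul]).symm

theorem IsLowerTriangular.submatrix_mul_castLE [NonUnitalNonAssocSemiring α] {o p : Type*}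
    {A : Matrix (Fin n) (Fin n) α} (hA : A.IsLowerTriangular) (h : m ≤ n)
    (B : Matrix (Fin n) o α) (f : p → o) :
    (A * B).submatrix (Fin.castLE h) f
      = A.submatrix (Fin.castLE h) (Fin.castLE h) * B.submatrix (Fin.castLE h) f := by
  ext i j
  simp only [submatrix_apply, mul_apply]
  rw [hA.sum_mul_eq_sum_Iic, Fin.sum_Iic_castLE]
  exact ((hA.submatrix_castLE h).sum_mul_eq_sum_Iic i _).symm

variable {ι R : Type*} [Fintype ι] [LinearOrder ι] [CommRing R]

theorem IsLowerTriangular.det_mul_transpose {L : Matrix ι ι R} (hL : L.IsLowerTriangular) :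
    (L * Lᵀ).det = ∏ i, L i i ^ 2 := by
  simp [det_of_isLowerTriangular L hL, sq, prod_mul_distrib]

theorem IsLowerTriangular.det_submatrix_castLE_mul_transpose {L : Matrix (Fin n) (Fin n) R}
    (hL : L.IsLowerTriangular) (i : Fin n) :
    ((L * Lᵀ).submatrix (Fin.castLE i.isLt) (Fin.castLE i.isLt)).det = ∏ k ≤ i, L k k ^ 2 := by
  rw [hL.submatrix_mul_castLE, ← transpose_submatrix,
    (hL.submatrix_castLE i.isLt).det_mul_transpose, ← Fin.map_castLEEmb_univ, prod_map]
  rfl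

end Matrix

theorem Real.prod_rpow_mul_prod_prod_Iic_rpow {n : ℕ} {x : Fin n → ℝ} (hx : ∀ j, 0 < x j)
    (c e : ℝ) :
    (∏ j, x j) ^ c * ∏ i, (∏ k ≤ i, x k) ^ e = ∏ j, x j ^ (c + (n - j : ℕ) * e) := by
  have hx₀ : ∀ j, 0 ≤ x j := fun j => (hx j).le
  calc (∏ j, x j) ^ c * ∏ i, (∏ k ≤ i, x k) ^ e
      = (∏ j, x j ^ c) * ∏ i, ∏ k ≤ i, x k ^ e := by
        simp only [Real.finsetProd_rpow _ _ fun j _ => hx₀ j]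
    _ = ∏ j, x j ^ c * (x j ^ e) ^ (n - j) := by
        rw [Fin.prod_prod_Iic_eq_prod_pow, prod_mul_distrib]
    _ = ∏ j, x j ^ (c + (n - j : ℕ) * e) := by
        simp only [← Real.rpow_mul_natCast (hx₀ _), ← Real.rpow_add (hx _), mul_comm e]

theorem marginally_uniform_density_identity_general
    (D : ℕ) (L : Matrix (Fin D) (Fin D) ℝ)
    (htri : ∀ i j : Fin D, i < j → L i j = 0)
    (hdiag : ∀ i : Fin D, L i i ≠ 0) :
    (L * Lᵀ).det ^ ((D : ℝ) * ((D : ℝ) - 1) / 2 - 1)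
        * ∏ i : Fin D,
            (((L * Lᵀ).submatrix (Fin.castLE i.isLt) (Fin.castLE i.isLt)).det
              ^ (-(((D : ℝ) + 1) / 2)))
      = ∏ j : Fin D, |L j j| ^ (((j : ℕ) + 1 - 3 : ℝ) * ((D : ℝ) + 1)) := by
  have hL : L.IsLowerTriangular := fun i j hij => htri i j hij
  simp only [hL.det_mul_transpose, hL.det_submatrix_castLE_mul_transpose]
  rw [Real.prod_rpow_mul_prod_prod_Iic_rpow fun j => sq_pos_of_ne_zero (hdiag j)]
  refine prod_congr rfl fun j _ => ?_
  rw [← sq_abs, ← Real.rpow_natCast_mul (abs_nonneg _), Nat.cast_sub j.isLt.le]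
  congr 1
  push_cast
  ring

/-- Key identity in the proof of Theorem 2.1 (part 1):
`(det P)^{D(D−1)/2 − 1} ∏_i M_i^{−(D+1)/2} = ∏_j |L j j|^{(j−3)(D+1)}`
where `P = L Lᵀ` and `M_i` is the `i`-th leading principal minor of `P`. -/
theorem marginally_uniform_density_identity
    (D : ℕ) (hD : 1 ≤ D) (L : Matrix (Fin D) (Fin D) ℝ)
    (htri : ∀ i j : Fin D, i < j → L i j = 0)
    (hdiag : ∀ i : Fin D, L i i ≠ 0) :
    (L * Lᵀ).det ^ ((D : ℝ) * ((D : ℝ) - 1) / 2 - 1)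
        * ∏ i : Fin D,
            (((L * Lᵀ).submatrix (Fin.castLE i.isLt) (Fin.castLE i.isLt)).det
              ^ (-(((D : ℝ) + 1) / 2)))
      = ∏ j : Fin D, |L j j| ^ (((j : ℕ) + 1 - 3 : ℝ) * ((D : ℝ) + 1)) :=
  marginally_uniform_density_identity_general D L htri hdiag
end
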